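/- arXiv:1306.2291 — 3 statements merged into one kernel-verified Lean document; each statement's English description precedes it below -/
import Mathlib

section
/- Let S be a set of ω-sharing groups and let {x₁/t₁} ∪ θ be an idempotent substitution, where θ = {x₂/t₂, …, x_p/t_p}. Then mgu_p(S, {x₁/t₁} ∪ θ) = mgu_p(mgu_p(S, {x₁/t₁}), θ), i.e. parallel abstract unification with the whole substitution coincides with parallel abstract unification with the first binding followed by parallel abstract unification with the remaining bindings. -/
open Classical

/-- First-order terms over a signature `Sig` with arity function `ar`,
    with variables drawn from `ℕ` (a countably infinite set). -/
inductive FTerm (Sig : Type) (ar : Sig → ℕ) : Type where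
  | var : ℕ → FTerm Sig ar
  | app : (f : Sig) → (Fin (ar f) → FTerm Sig ar) → FTerm Sig ar

variable {Sig : Type} {ar : Sig → ℕ}

namespace FTerm

/-- Number of occurrences of the variable `v` in a term. -/
def occ (v : ℕ) : FTerm Sig ar → ℕ
  | var w => if w = v then 1 else 0
  | app _ ts => ∑ i, occ v (ts i)

/-- Application of a substitution (a total map from variables to terms) to a term. -/
def subst (δ : ℕ → FTerm Sig ar) : FTerm Sig ar → FTerm Sig ar
  | var v => δ v
  | app f ts => app f (fun i => (ts i).subst δ)

end FTerm

/-- Domain of a substitution. -/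
def domS (θ : ℕ → FTerm Sig ar) : Set ℕ := {x | θ x ≠ FTerm.var x}

/-- Set of variables occurring in a term. -/
def varsT (t : FTerm Sig ar) : Set ℕ := {v | FTerm.occ v t ≠ 0}

/-- Range of a substitution. -/
def rngS (θ : ℕ → FTerm Sig ar) : Set ℕ := ⋃ x ∈ domS θ, varsT (θ x)

/-- Variables of a substitution. -/
def varsS (θ : ℕ → FTerm Sig ar) : Set ℕ := domS θ ∪ rngS θ

/-- A substitution is idempotent iff its domain and range are disjoint. -/
def Idem (θ : ℕ → FTerm Sig ar) : Prop := domS θ ∩ rngS θ = ∅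

/-- Multiplicity `χ(B,t)` of an ω-sharing group `B` in a term `t`. -/
def chi (B : ℕ →₀ ℕ) (t : FTerm Sig ar) : ℕ := ∑ v ∈ B.support, B v * FTerm.occ v t

/-- A parallel sharing graph for a set `S` of ω-sharing groups and an
    (idempotent) substitution `θ`.  The layers are indexed by the variables in
    the domain of `θ` (the function `layer` assigns to each edge its layer, so
    the edge sets of different layers are automatically pairwise disjoint). -/
structure PSG (Sig : Type) (ar : Sig → ℕ) (S : Set (ℕ →₀ ℕ)) (θ : ℕ → FTerm Sig ar) where
  N : Type
  fintypeN : Fintype N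
  nonemptyN : Nonempty N
  E : Type
  fintypeE : Fintype E
  layer : E → ℕ
  src : E → N
  tgt : E → N
  label : N → (ℕ →₀ ℕ)
  label_mem : ∀ n, label n ∈ S
  layer_mem : ∀ e, layer e ∈ domS θ
  out_deg : ∀ (n : N), ∀ x ∈ domS θ,
    Nat.card {e : E // layer e = x ∧ src e = n} = chi (label n) (FTerm.var x : FTerm Sig ar)
  in_deg : ∀ (n : N), ∀ x ∈ domS θ,
    Nat.card {e : E // layer e = x ∧ tgt e = n} = chi (label n) (θ x)
  conn : ∀ a b : N, Relation.ReflTransGen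
    (fun a b => ∃ e : E, (src e = a ∧ tgt e = b) ∨ (src e = b ∧ tgt e = a)) a b

attribute [instance] PSG.fintypeN PSG.fintypeE PSG.nonemptyN

/-- The resultant ω-sharing group of a parallel sharing graph. -/
noncomputable def PSG.res {S : Set (ℕ →₀ ℕ)} {θ : ℕ → FTerm Sig ar}
    (G : PSG Sig ar S θ) : ℕ →₀ ℕ := ∑ n : G.N, G.label n

/-- Parallel abstract unification. -/
def mguP (S : Set (ℕ →₀ ℕ)) (θ : ℕ → FTerm Sig ar) : Set (ℕ →₀ ℕ) :=
  { B | ∃ G : PSG Sig ar S θ, G.res = B }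

/-- The single-binding substitution `{x/t}`. -/
def sbind (x : ℕ) (t : FTerm Sig ar) : ℕ → FTerm Sig ar :=
  fun v => if v = x then t else FTerm.var v

/-!
Both inclusions are graph surgery. Given a parallel sharing graph for `{x₁/t₁} ∪ θ`, contract each
connected component of its `x₁`-layer to a single node labelled by the sum of the labels in it:
the component is itself a sharing graph for `{x₁/t₁}`, and since `χ(·, t)` is additive the
degrees in the layers of `θ` are preserved. Conversely, given a sharing graph for `θ` over
`mguP S {x₁/t₁}`, replace each node by a sharing graph for `{x₁/t₁}` realizing its label and
reattach every `θ`-edge to a node of that expansion, distributing the edges of each layer so that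
every inner node receives exactly its own multiplicity; this is possible because these
multiplicities add up to the degree of the replaced node.
-/

open Relation

lemma chi_var (B : ℕ →₀ ℕ) (x : ℕ) : chi B (FTerm.var x : FTerm Sig ar) = B x := by
  simp [chi, FTerm.occ, eq_comm]

lemma chi_sum {ι : Type*} (s : Finset ι) (B : ι → ℕ →₀ ℕ) (t : FTerm Sig ar) :
    chi (∑ i ∈ s, B i) t = ∑ i ∈ s, chi (B i) t :=
  (Finsupp.sum_finsetSum_index (h := fun v k => k * FTerm.occ v t) (fun _ => zero_mul _)
    fun _ _ _ => add_mul _ _ _).symm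

lemma domS_sbind {x : ℕ} {t : FTerm Sig ar} (ht : t ≠ FTerm.var x) : domS (sbind x t) = {x} := by
  ext v
  by_cases h : v = x <;> simp [domS, sbind, h, ht]

lemma mem_domS_iff_of_ne {η θ : ℕ → FTerm Sig ar} {x₁ x : ℕ} (hη : ∀ x ≠ x₁, η x = θ x)
    (hx : x ≠ x₁) : x ∈ domS η ↔ x ∈ domS θ := by
  simp [domS, hη x hx]

lemma mem_domS_of_eq {η : ℕ → FTerm Sig ar} {x : ℕ} {t : FTerm Sig ar} (h : η x = t)
    (ht : t ≠ FTerm.var x) : x ∈ domS η :=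
  fun h' => ht (h.symm.trans h')

lemma ne_of_mem_domS {θ : ℕ → FTerm Sig ar} {x₁ x : ℕ} (hθ : θ x₁ = FTerm.var x₁)
    (hx : x ∈ domS θ) : x ≠ x₁ := by
  rintro rfl
  exact hx hθ

lemma exists_fiber_card_eq {A M : Type*} [Finite A] [Fintype M] (c : M → ℕ)
    (h : Nat.card A = ∑ m, c m) : ∃ g : A → M, ∀ m, Nat.card {a // g a = m} = c m := by
  obtain ⟨e⟩ : Nonempty (A ≃ Σ m, Fin (c m)) := Finite.card_eq.1 (by simp [h])
  exact ⟨fun a => (e a).1, fun m => by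
    rw [Nat.card_congr ((e.subtypeEquiv fun _ => Iff.rfl).trans (Equiv.sigmaSubtype m))]
    simp⟩

lemma natCard_and_comp_eq_sum {E N K : Type*} [Fintype E] [Fintype N] [DecidableEq K]
    (P : E → Prop) (ep : E → N) (f : N → K) (c : K) :
    Nat.card {e // P e ∧ f (ep e) = c} = ∑ n : {n // f n = c}, Nat.card {e // P e ∧ ep e = n} := by
  rw [← Nat.card_sigma]
  exact Nat.card_congr
    { toFun := fun e => ⟨⟨ep e, e.2.2⟩, e.1, e.2.1, rfl⟩
      invFun := fun p => ⟨p.2.1, p.2.2.1, by rw [p.2.2.2]; exact p.1.2⟩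
      left_inv := fun _ => rfl
      right_inv := by rintro ⟨⟨n, hn⟩, e, he, h : ep e = n⟩; subst h; rfl }

lemma natCard_subtype_subtype {α : Type*} {p q : α → Prop} {q' : Subtype p → Prop}
    (hq : ∀ a, q' a ↔ q a) (h : ∀ a, q a → p a) : Nat.card (Subtype q') = Nat.card (Subtype q) :=
  Nat.card_congr ((Equiv.subtypeEquivRight hq).trans (Equiv.subtypeSubtypeEquivSubtype (h _)))

lemma natCard_sigmaMap_fiber {ι : Type*} {A N : ι → Type*} (f : ∀ i, A i → N i) (i : ι)
    (m : N i) :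
    Nat.card {a // Sigma.map id f a = ⟨i, m⟩} = Nat.card {a : A i // f i a = m} := by
  refine (Nat.card_congr (Equiv.ofBijective
    (fun a => ⟨⟨i, a.1⟩, by simp [Sigma.map, a.2]⟩ : {a : A i // f i a = m} → _) ⟨?_, ?_⟩)).symm
  · exact fun a b h => Subtype.ext (sigma_mk_injective (congrArg Subtype.val h))
  · rintro ⟨⟨j, u⟩, h⟩
    obtain ⟨rfl, h⟩ := Sigma.mk.inj_iff.1 h
    exact ⟨⟨u, eq_of_heq h⟩, rfl⟩

/-- Counts edges in the expansion of a graph with edges `B`: each node `i` is replaced by a graph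
with edges `A i`, all in layer `x₁`, and endpoint map `f i`, and the edges `B` are reattached to the
new nodes by `g`. -/
lemma natCard_sumElim_layer_eq {ι : Type*} {A N : ι → Type*} {B : Type*} [Finite ι]
    [∀ i, Finite (A i)] [Finite B] (f : ∀ i, A i → N i) (g : B → Σ i, N i) (layer : B → ℕ)
    {x₁ : ℕ} (hlayer : ∀ b, layer b ≠ x₁) (x : ℕ) (i : ι) (m : N i) :
    Nat.card {e // Sum.elim (fun _ => x₁) layer e = x ∧ Sum.elim (Sigma.map id f) g e = ⟨i, m⟩} =
      if x = x₁ then Nat.card {a : A i // f i a = m}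
      else Nat.card {b // layer b = x ∧ g b = ⟨i, m⟩} := by
  rw [Nat.card_congr Equiv.subtypeSum, Nat.card_sum]
  split_ifs with hx
  · subst hx
    simp [hlayer, natCard_sigmaMap_fiber]
  · simp [Ne.symm hx]

lemma exists_sigma_lift_fiber_card_eq {E X ι : Type*} {M : ι → Type*} [Finite E]
    [∀ i, Fintype (M i)] (layer : E → X) (π : E → ι) {s : Set X} (hs : ∀ e, layer e ∈ s)
    (c : X → ∀ i, M i → ℕ)
    (h : ∀ x ∈ s, ∀ i, Nat.card {e // layer e = x ∧ π e = i} = ∑ m, c x i m) :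
    ∃ g : E → Σ i, M i, (∀ e, (g e).1 = π e) ∧
      ∀ x ∈ s, ∀ i m, Nat.card {e // layer e = x ∧ g e = ⟨i, m⟩} = c x i m := by
  choose f hf using fun x (hx : x ∈ s) i => exists_fiber_card_eq (c x i) (h x hx i)
  refine ⟨fun e => ⟨π e, f _ (hs e) _ ⟨e, rfl, rfl⟩⟩, fun _ => rfl, fun x hx i m => ?_⟩
  rw [← hf x hx i m, Nat.card_congr (Equiv.subtypeSubtypeEquivSubtypeExists _ _)]
  refine Nat.card_congr (Equiv.subtypeEquivRight fun e => ⟨?_, ?_⟩)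
  · rintro ⟨rfl, hg⟩
    obtain ⟨rfl, hm⟩ := Sigma.mk.inj_iff.1 hg
    exact ⟨⟨rfl, rfl⟩, eq_of_heq hm⟩
  · rintro ⟨⟨rfl, rfl⟩, rfl⟩
    exact ⟨rfl, rfl⟩

def EdgeAdj {E N : Type*} (src tgt : E → N) (a b : N) : Prop :=
  ∃ e, (src e = a ∧ tgt e = b) ∨ (src e = b ∧ tgt e = a)

instance {E N : Type*} (src tgt : E → N) : Std.Symm (EdgeAdj src tgt) :=
  ⟨fun _ _ ⟨e, h⟩ => ⟨e, h.symm⟩⟩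

lemma EdgeAdj.map {E N E' N' : Type*} {src tgt : E → N} {src' tgt' : E' → N'} (φ : E → E')
    (f : N → N') (hsrc : ∀ e, src' (φ e) = f (src e)) (htgt : ∀ e, tgt' (φ e) = f (tgt e))
    {a b : N} : EdgeAdj src tgt a b → EdgeAdj src' tgt' (f a) (f b) := by
  rintro ⟨e, ⟨rfl, rfl⟩ | ⟨rfl, rfl⟩⟩
  exacts [⟨φ e, .inl ⟨hsrc e, htgt e⟩⟩, ⟨φ e, .inr ⟨hsrc e, htgt e⟩⟩]

lemma Relation.ReflTransGen.restrict {α : Type*} {r : α → α → Prop} {P : α → Prop}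
    (hP : ∀ a b, r a b → P b → P a) {a b : α} (h : ReflTransGen r a b) (ha : P a) (hb : P b) :
    ReflTransGen (fun x y : Subtype P => r x y) ⟨a, ha⟩ ⟨b, hb⟩ := by
  induction h with
  | refl => rfl
  | tail _ hcb ih => exact (ih (hP _ _ hcb hb)).tail hcb

lemma Relation.ReflTransGen.sigma_mk {ι : Type*} {X : ι → Type*}
    {r : (Σ i, X i) → (Σ i, X i) → Prop} {R : ι → ι → Prop}
    (hfiber : ∀ i (x y : X i), ReflTransGen r ⟨i, x⟩ ⟨i, y⟩)
    (hlift : ∀ i j, R i j → ∃ p q, p.1 = i ∧ q.1 = j ∧ r p q) {i j : ι} (h : ReflTransGen R i j)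
    (x : X i) (y : X j) : ReflTransGen r ⟨i, x⟩ ⟨j, y⟩ := by
  induction h with
  | refl => exact hfiber i x y
  | tail _ hR ih =>
    obtain ⟨⟨_, u⟩, ⟨_, v⟩, rfl, rfl, huv⟩ := hlift _ _ hR
    exact ((ih u).tail huv).trans (hfiber _ v y)

lemma reflTransGen_edgeAdj_sumElim {ι B : Type*} {A N : ι → Type*} {src tgt : ∀ i, A i → N i}
    {srcB tgtB : B → ι} {gsrc gtgt : B → Σ i, N i} (hgsrc : ∀ b, (gsrc b).1 = srcB b)
    (hgtgt : ∀ b, (gtgt b).1 = tgtB b)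
    (hfiber : ∀ i (u v : N i), ReflTransGen (EdgeAdj (src i) (tgt i)) u v)
    (hbase : ∀ i j, ReflTransGen (EdgeAdj srcB tgtB) i j) (p q : Σ i, N i) :
    ReflTransGen (EdgeAdj (Sum.elim (Sigma.map id src) gsrc) (Sum.elim (Sigma.map id tgt) gtgt))
      p q := by
  refine ReflTransGen.sigma_mk (fun i u v => ?_) ?_ (hbase p.1 q.1) p.2 q.2
  · exact ReflTransGen.lift (Sigma.mk i) (fun _ _ h => EdgeAdj.map
      (fun e => (.inl ⟨i, e⟩ : (Σ i, A i) ⊕ B)) (Sigma.mk i) (fun _ => rfl) (fun _ => rfl) h)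
      _ _ (hfiber i u v)
  · rintro _ _ ⟨b, ⟨rfl, rfl⟩ | ⟨rfl, rfl⟩⟩
    exacts [⟨gsrc b, gtgt b, hgsrc b, hgtgt b, .inr b, .inl ⟨rfl, rfl⟩⟩,
      ⟨gtgt b, gsrc b, hgtgt b, hgsrc b, .inr b, .inr ⟨rfl, rfl⟩⟩]

namespace PSG

variable {S : Set (ℕ →₀ ℕ)} {η : ℕ → FTerm Sig ar}

lemma reflTransGen_edgeAdj (G : PSG Sig ar S η) (a b : G.N) :
    ReflTransGen (EdgeAdj G.src G.tgt) a b :=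
  G.conn a b

abbrev layerAdj (G : PSG Sig ar S η) (x : ℕ) : G.N → G.N → Prop :=
  EdgeAdj (fun e : {e // G.layer e = x} => G.src e) (fun e => G.tgt e)

def layerSetoid (G : PSG Sig ar S η) (x : ℕ) : Setoid G.N where
  r := ReflTransGen (G.layerAdj x)
  iseqv := ⟨fun _ => .refl, fun h => symm h, .trans⟩

lemma mk_src_eq_mk_tgt (G : PSG Sig ar S η) {x : ℕ} {e : G.E} (he : G.layer e = x) :
    Quotient.mk (G.layerSetoid x) (G.src e) = Quotient.mk _ (G.tgt e) :=
  Quotient.sound (.single ⟨⟨e, he⟩, .inl ⟨rfl, rfl⟩⟩)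

lemma card_layer_comp_eq_chi (G : PSG Sig ar S η) {K : Type*} [DecidableEq K] (ep : G.E → G.N)
    (f : G.N → K) (k : K) (x : ℕ) (t : FTerm Sig ar)
    (hdeg : ∀ n, Nat.card {e // G.layer e = x ∧ ep e = n} = chi (G.label n) t) :
    Nat.card {e // G.layer e = x ∧ f (ep e) = k} = chi (∑ n : {n // f n = k}, G.label n) t := by
  rw [natCard_and_comp_eq_sum, chi_sum]
  exact Finset.sum_congr rfl fun n _ => hdeg n

variable {x₁ : ℕ} {t₁ : FTerm Sig ar}

noncomputable def component (G : PSG Sig ar S η) (ht₁ : t₁ ≠ FTerm.var x₁) (hη₁ : η x₁ = t₁)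
    (c : Quotient (G.layerSetoid x₁)) : PSG Sig ar S (sbind x₁ t₁) where
  N := {n // Quotient.mk _ n = c}
  fintypeN := inferInstance
  nonemptyN := ⟨⟨c.out, c.out_eq⟩⟩
  E := {e // G.layer e = x₁ ∧ Quotient.mk _ (G.src e) = c}
  fintypeE := inferInstance
  layer _ := x₁
  src e := ⟨G.src e, e.2.2⟩
  tgt e := ⟨G.tgt e, (G.mk_src_eq_mk_tgt e.2.1).symm.trans e.2.2⟩
  label n := G.label n
  label_mem n := G.label_mem n
  layer_mem _ := by simp [domS_sbind ht₁]
  out_deg := by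
    rintro ⟨n, hn⟩ x hx
    obtain rfl : x = x₁ := by simpa [domS_sbind ht₁] using hx
    refine .trans ?_ (G.out_deg n x (mem_domS_of_eq hη₁ ht₁))
    exact natCard_subtype_subtype (fun e => by simp [Subtype.ext_iff, e.2.1])
      fun e h => ⟨h.1, by rw [h.2]; exact hn⟩
  in_deg := by
    rintro ⟨n, hn⟩ x hx
    obtain rfl : x = x₁ := by simpa [domS_sbind ht₁] using hx
    rw [show sbind x t₁ x = η x by simp [sbind, hη₁], ← G.in_deg n x (mem_domS_of_eq hη₁ ht₁)]
    exact natCard_subtype_subtype (fun e => by simp [Subtype.ext_iff, e.2.1])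
      fun e h => ⟨h.1, by rw [G.mk_src_eq_mk_tgt h.1, h.2]; exact hn⟩
  conn := by
    rintro ⟨a, ha⟩ ⟨b, hb⟩
    have hab : ReflTransGen (G.layerAdj x₁) a b := Quotient.exact (ha.trans hb.symm)
    refine ReflTransGen.mono ?_ _ _
      (hab.restrict (P := fun n => Quotient.mk _ n = c)
        (fun _ _ hr hc => (Quotient.sound (ReflTransGen.single hr)).trans hc) ha hb)
    rintro ⟨a, ha⟩ ⟨b, hb⟩ ⟨⟨e, he⟩, ⟨hs : G.src e = a, ht⟩ | ⟨hs : G.src e = b, ht⟩⟩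
    · exact ⟨⟨e, he, hs ▸ ha⟩, .inl ⟨Subtype.ext hs, Subtype.ext ht⟩⟩
    · exact ⟨⟨e, he, hs ▸ hb⟩, .inr ⟨Subtype.ext hs, Subtype.ext ht⟩⟩

lemma res_component (G : PSG Sig ar S η) (ht₁ : t₁ ≠ FTerm.var x₁) (hη₁ : η x₁ = t₁)
    (c : Quotient (G.layerSetoid x₁)) :
    (G.component ht₁ hη₁ c).res = ∑ n : {n // Quotient.mk _ n = c}, G.label n :=
  rfl

lemma layer_eq_of_sbind (G : PSG Sig ar S (sbind x₁ t₁)) (ht₁ : t₁ ≠ FTerm.var x₁) (e : G.E) :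
    G.layer e = x₁ := by
  simpa [domS_sbind ht₁] using G.layer_mem e

lemma natCard_src_eq_of_sbind (G : PSG Sig ar S (sbind x₁ t₁)) (ht₁ : t₁ ≠ FTerm.var x₁)
    (m : G.N) : Nat.card {e // G.src e = m} = chi (G.label m) (FTerm.var x₁ : FTerm Sig ar) := by
  rw [← G.out_deg m x₁ (by simp [domS_sbind ht₁])]
  simp [G.layer_eq_of_sbind ht₁]

lemma natCard_tgt_eq_of_sbind (G : PSG Sig ar S (sbind x₁ t₁)) (ht₁ : t₁ ≠ FTerm.var x₁)
    (m : G.N) : Nat.card {e // G.tgt e = m} = chi (G.label m) t₁ := by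
  have h := G.in_deg m x₁ (by simp [domS_sbind ht₁])
  rw [show sbind x₁ t₁ x₁ = t₁ by simp [sbind]] at h
  rw [← h]
  simp [G.layer_eq_of_sbind ht₁]

variable {θ : ℕ → FTerm Sig ar}

lemma exists_contraction (G : PSG Sig ar S η) (ht₁ : t₁ ≠ FTerm.var x₁) (hη₁ : η x₁ = t₁)
    (hη : ∀ x ≠ x₁, η x = θ x) (hθ : θ x₁ = FTerm.var x₁) :
    ∃ H : PSG Sig ar (mguP S (sbind x₁ t₁)) θ, H.res = G.res := by
  have hdom : ∀ x ∈ domS θ, x ∈ domS η ∧ x ≠ x₁ := fun x hx =>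
    ⟨(mem_domS_iff_of_ne hη (ne_of_mem_domS hθ hx)).2 hx, ne_of_mem_domS hθ hx⟩
  refine ⟨{
    N := Quotient (G.layerSetoid x₁)
    fintypeN := inferInstance
    nonemptyN := ⟨Quotient.mk _ (Classical.arbitrary G.N)⟩
    E := {e // G.layer e ≠ x₁}
    fintypeE := inferInstance
    layer e := G.layer e
    src e := Quotient.mk _ (G.src e)
    tgt e := Quotient.mk _ (G.tgt e)
    label c := (G.component ht₁ hη₁ c).res
    label_mem c := ⟨_, rfl⟩
    layer_mem e := (mem_domS_iff_of_ne hη e.2).1 (G.layer_mem e)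
    out_deg c x hx := ?_
    in_deg c x hx := ?_
    conn := ?_ }, Fintype.sum_fiberwise _ _⟩
  · obtain ⟨hxη, hx₁⟩ := hdom x hx
    rw [natCard_subtype_subtype (q := fun e => G.layer e = x ∧ Quotient.mk _ (G.src e) = c)
      (fun _ => Iff.rfl) (fun e h => h.1 ▸ hx₁), res_component]
    exact G.card_layer_comp_eq_chi G.src (Quotient.mk _) c x _ fun n => G.out_deg n x hxη
  · obtain ⟨hxη, hx₁⟩ := hdom x hx
    rw [natCard_subtype_subtype (q := fun e => G.layer e = x ∧ Quotient.mk _ (G.tgt e) = c)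
      (fun _ => Iff.rfl) (fun e h => h.1 ▸ hx₁), res_component]
    exact G.card_layer_comp_eq_chi G.tgt (Quotient.mk _) c x _ fun n => hη x hx₁ ▸ G.in_deg n x hxη
  · refine Quotient.ind₂ (ReflTransGen.lift' _ ?_ · · (G.reflTransGen_edgeAdj _ _))
    rintro _ _ ⟨e, h⟩
    by_cases he : G.layer e = x₁
    · rcases h with ⟨rfl, rfl⟩ | ⟨rfl, rfl⟩ <;>
        simp [Function.onFun, G.mk_src_eq_mk_tgt he, ReflTransGen.refl]
    · exact .single ⟨⟨e, he⟩,
        h.imp (.imp (congrArg _) (congrArg _)) (.imp (congrArg _) (congrArg _))⟩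

lemma exists_expansion (H : PSG Sig ar (mguP S (sbind x₁ t₁)) θ) (ht₁ : t₁ ≠ FTerm.var x₁)
    (hη₁ : η x₁ = t₁) (hη : ∀ x ≠ x₁, η x = θ x) (hθ : θ x₁ = FTerm.var x₁) :
    ∃ G : PSG Sig ar S η, G.res = H.res := by
  choose Gs hGs using H.label_mem
  have hHlayer (e : H.E) : H.layer e ≠ x₁ := ne_of_mem_domS hθ (H.layer_mem e)
  obtain ⟨gsrc, hgsrc, hgsrc_card⟩ := exists_sigma_lift_fiber_card_eq H.layer H.src H.layer_mem
    (fun x n m => (Gs n).label m x) fun x hx n => by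
      rw [H.out_deg n x hx, chi_var, ← hGs n, res, Finsupp.finsetSum_apply]
  obtain ⟨gtgt, hgtgt, hgtgt_card⟩ := exists_sigma_lift_fiber_card_eq H.layer H.tgt H.layer_mem
    (fun x n m => chi ((Gs n).label m) (θ x)) fun x hx n => by
      rw [H.in_deg n x hx, ← hGs n, res, chi_sum]
  refine ⟨{
    N := Σ n, (Gs n).N
    fintypeN := inferInstance
    nonemptyN := ⟨⟨Classical.arbitrary _, Classical.arbitrary _⟩⟩
    E := (Σ n, (Gs n).E) ⊕ H.E
    fintypeE := inferInstance
    layer := Sum.elim (fun _ => x₁) H.layer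
    src := Sum.elim (Sigma.map id fun n => (Gs n).src) gsrc
    tgt := Sum.elim (Sigma.map id fun n => (Gs n).tgt) gtgt
    label p := (Gs p.1).label p.2
    label_mem p := (Gs p.1).label_mem p.2
    layer_mem := ?_
    out_deg := ?_
    in_deg := ?_
    conn := ?_ }, ?_⟩
  · rintro (e | e)
    exacts [mem_domS_of_eq hη₁ ht₁, (mem_domS_iff_of_ne hη (hHlayer e)).2 (H.layer_mem e)]
  · rintro ⟨n, m⟩ x hx
    rw [natCard_sumElim_layer_eq _ _ _ hHlayer]
    split_ifs with hxx
    · subst hxx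
      exact (Gs n).natCard_src_eq_of_sbind ht₁ m
    · rw [chi_var]
      exact hgsrc_card x ((mem_domS_iff_of_ne hη hxx).1 hx) n m
  · rintro ⟨n, m⟩ x hx
    rw [natCard_sumElim_layer_eq _ _ _ hHlayer]
    split_ifs with hxx
    · subst hxx
      rw [hη₁]
      exact (Gs n).natCard_tgt_eq_of_sbind ht₁ m
    · rw [hη x hxx]
      exact hgtgt_card x ((mem_domS_iff_of_ne hη hxx).1 hx) n m
  · exact reflTransGen_edgeAdj_sumElim hgsrc hgtgt (fun n => (Gs n).reflTransGen_edgeAdj)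
      H.reflTransGen_edgeAdj
  · rw [res, Fintype.sum_sigma]
    exact Finset.sum_congr rfl fun n _ => hGs n

end PSG

theorem mguP_split_first_binding_general (Sig : Type) (ar : Sig → ℕ)
    (S : Set (ℕ →₀ ℕ)) (x₁ : ℕ) (t₁ : FTerm Sig ar) (θ : ℕ → FTerm Sig ar)
    (ht₁ : t₁ ≠ FTerm.var x₁)
    (hx₁ : θ x₁ = FTerm.var x₁) :
    mguP S (fun v => if v = x₁ then t₁ else θ v)
      = mguP (mguP S (sbind x₁ t₁)) θ := by
  have hη₁ : (fun v => if v = x₁ then t₁ else θ v) x₁ = t₁ := if_pos rfl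
  have hη : ∀ x ≠ x₁, (fun v => if v = x₁ then t₁ else θ v) x = θ x := fun _ hx => if_neg hx
  ext B
  constructor
  · rintro ⟨G, rfl⟩
    exact G.exists_contraction ht₁ hη₁ hη hx₁
  · rintro ⟨H, rfl⟩
    exact H.exists_expansion ht₁ hη₁ hη hx₁

/-- Lemma 1 of the paper: parallel abstract unification with the
whole idempotent substitution `{x₁/t₁} ∪ θ` coincides with parallel abstract
unification with the first binding `{x₁/t₁}` followed by parallel abstract
unification with the remaining bindings `θ`. -/
theorem mguP_split_first_binding (Sig : Type) (ar : Sig → ℕ)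
    (S : Set (ℕ →₀ ℕ)) (x₁ : ℕ) (t₁ : FTerm Sig ar) (θ : ℕ → FTerm Sig ar)
    (ht₁ : t₁ ≠ FTerm.var x₁)
    (hx₁ : θ x₁ = FTerm.var x₁)
    (hfin : (domS (fun v => if v = x₁ then t₁ else θ v)).Finite)
    (hidem : Idem (fun v => if v = x₁ then t₁ else θ v)) :
    mguP S (fun v => if v = x₁ then t₁ else θ v)
      = mguP (mguP S (sbind x₁ t₁)) θ :=
  mguP_split_first_binding_general Sig ar S x₁ t₁ θ ht₁ hx₁
end

section
/- Let 𝒢 = {G^i}_{i∈[1,p]} be a parallel sharing graph for a set S of ω-sharing groups and the idempotent substitution {x₁/t₁, …, x_p/t_p}, and let G¹₁, …, G¹_k be the connected components of the layer G¹. Then each component G¹_j, equipped with the restriction of the labeling l_𝒢 to its nodes, is a single-layer parallel sharing graph for S and the single-binding substitution {x₁/t₁}; in particular res(G¹_j) ∈ mgu_p(S,{x₁/t₁}) for every j ∈ [1,k], and ⊎_{j=1}^{k} res(G¹_j) = res(𝒢). -/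
open Classical

variable {Sig : Type} {ar : Sig → ℕ}

/-- Connectivity relation induced by the edges of the layer `x₁` of a parallel
sharing graph: two nodes are related iff they are joined by a (possibly empty)
path of layer-`x₁` edges, traversed in either direction.  Its equivalence
classes are the connected components of the layer `G¹`. -/
def layerConn {S : Set (ℕ →₀ ℕ)} {θ : ℕ → FTerm Sig ar}
    (G : PSG Sig ar S θ) (x₁ : ℕ) : G.N → G.N → Prop :=
  Relation.ReflTransGen
    (fun a b => ∃ e : G.E, G.layer e = x₁ ∧
      ((G.src e = a ∧ G.tgt e = b) ∨ (G.src e = b ∧ G.tgt e = a)))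

/-- The resultant ω-sharing group of the connected component (in the layer `x₁`)
of the node `n`: the sum of the labels of all nodes connected to `n` by
layer-`x₁` edges. -/
noncomputable def compRes {S : Set (ℕ →₀ ℕ)} {θ : ℕ → FTerm Sig ar}
    (G : PSG Sig ar S θ) (x₁ : ℕ) (n : G.N) : ℕ →₀ ℕ :=
  ∑ m : G.N, Set.indicator {m' | layerConn G x₁ n m'} G.label m

/-! The layer-`x` component of a node keeps every layer-`x` edge incident to it, so its in- and
out-degrees are those of `G` and it is a single-layer parallel sharing graph for `{x/θ x}`, connected
by construction. The components partition the nodes, so their resultants add up to `res(𝒢)`. -/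

theorem mem_domS_sbind {x y : ℕ} {t : FTerm Sig ar} :
    y ∈ domS (sbind x t) ↔ y = x ∧ t ≠ FTerm.var x := by
  by_cases hy : y = x
  · subst hy; simp [domS, sbind]
  · simp [domS, sbind, hy]

theorem sbind_self (x : ℕ) (t : FTerm Sig ar) : sbind x t x = t := if_pos rfl

theorem Finset.sum_sum_indicator_of_existsUnique {ι M : Type*} [Fintype ι] [AddCommMonoid M]
    (r : ι → ι → Prop) (f : ι → M) (R : Finset ι) (hR : ∀ k, ∃! m, m ∈ R ∧ r m k) :
    ∑ m ∈ R, ∑ k, {k | r m k}.indicator f k = ∑ k, f k := by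
  rw [Finset.sum_comm]
  refine Finset.sum_congr rfl fun k _ => ?_
  obtain ⟨m₀, ⟨hm₀R, hm₀k⟩, huniq⟩ := hR k
  calc ∑ m ∈ R, {k | r m k}.indicator f k = {k | r m₀ k}.indicator f k :=
        Finset.sum_eq_single_of_mem m₀ hm₀R fun m hmR hne =>
          Set.indicator_of_notMem (fun hmk => hne (huniq m ⟨hmR, hmk⟩)) f
    _ = f k := Set.indicator_of_mem hm₀k f

theorem Relation.ReflTransGen.symm_of_symm {α : Type*} {r : α → α → Prop}
    (hr : ∀ a b, r a b → r b a) {a b : α} (h : Relation.ReflTransGen r a b) :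
    Relation.ReflTransGen r b a :=
  Relation.ReflTransGen.mono (fun a b => hr b a) _ _ (Relation.ReflTransGen.swap b a h)

namespace PSG

variable {S : Set (ℕ →₀ ℕ)} {θ : ℕ → FTerm Sig ar} (G : PSG Sig ar S θ) (x : ℕ)

theorem layerConn_tgt_iff {n : G.N} {e : G.E} (he : G.layer e = x) :
    layerConn G x n (G.tgt e) ↔ layerConn G x n (G.src e) :=
  ⟨fun h => h.tail ⟨e, he, Or.inr ⟨rfl, rfl⟩⟩, fun h => h.tail ⟨e, he, Or.inl ⟨rfl, rfl⟩⟩⟩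

theorem card_componentEdges {n : G.N} (f : G.E → G.N)
    (hf : ∀ e, G.layer e = x → (layerConn G x n (f e) ↔ layerConn G x n (G.src e)))
    (m : {m // layerConn G x n m}) :
    Nat.card {e : {e // G.layer e = x ∧ layerConn G x n (G.src e)} //
        (⟨f e.1, (hf e.1 e.2.1).2 e.2.2⟩ : {m // layerConn G x n m}) = m} =
      Nat.card {e : G.E // G.layer e = x ∧ f e = m.1} :=
  Nat.card_congr
    { toFun := fun e => ⟨e.1.1, e.1.2.1, congrArg Subtype.val e.2⟩
      invFun := fun e =>
        ⟨⟨e.1, e.2.1, (hf e.1 e.2.1).1 (e.2.2.symm ▸ m.2)⟩, Subtype.ext e.2.2⟩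
      left_inv := fun _ => rfl
      right_inv := fun _ => rfl }

theorem reflTransGen_component {n m : G.N} (hm : layerConn G x n m) :
    Relation.ReflTransGen
      (fun a b : {m // layerConn G x n m} =>
        ∃ e : {e // G.layer e = x ∧ layerConn G x n (G.src e)},
          ((⟨G.src e.1, e.2.2⟩ : {m // layerConn G x n m}) = a ∧
              ⟨G.tgt e.1, (layerConn_tgt_iff G x e.2.1).2 e.2.2⟩ = b) ∨
            ((⟨G.src e.1, e.2.2⟩ : {m // layerConn G x n m}) = b ∧
              ⟨G.tgt e.1, (layerConn_tgt_iff G x e.2.1).2 e.2.2⟩ = a))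
      ⟨n, .refl⟩ ⟨m, hm⟩ := by
  induction hm with
  | refl => exact .refl
  | @tail b c hnb hbc ih =>
    obtain ⟨e, he, ⟨hs, ht⟩ | ⟨hs, ht⟩⟩ := hbc
    · exact ih.tail ⟨⟨e, he, hs ▸ hnb⟩, Or.inl ⟨Subtype.ext hs, Subtype.ext ht⟩⟩
    · exact ih.tail ⟨⟨e, he, (layerConn_tgt_iff G x he).1 (ht ▸ hnb)⟩,
        Or.inr ⟨Subtype.ext hs, Subtype.ext ht⟩⟩

/-- The component `G¹_j` of the paper: the connected component of `n` in the layer `x`. -/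
noncomputable def layerComponent (n : G.N) : PSG Sig ar S (sbind x (θ x)) where
  N := {m // layerConn G x n m}
  fintypeN := Fintype.ofFinite _
  nonemptyN := ⟨⟨n, .refl⟩⟩
  E := {e // G.layer e = x ∧ layerConn G x n (G.src e)}
  fintypeE := Fintype.ofFinite _
  layer _ := x
  src e := ⟨G.src e.1, e.2.2⟩
  tgt e := ⟨G.tgt e.1, (layerConn_tgt_iff G x e.2.1).2 e.2.2⟩
  label m := G.label m.1
  label_mem m := G.label_mem m.1
  layer_mem e := mem_domS_sbind.2 ⟨rfl, (e.2.1 ▸ G.layer_mem e.1 : x ∈ domS θ)⟩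
  out_deg m y hy := by
    obtain ⟨hyx, hx⟩ := mem_domS_sbind.1 hy
    subst y
    simpa using (card_componentEdges G x G.src (fun _ _ => Iff.rfl) m).trans
      (G.out_deg m.1 x hx)
  in_deg m y hy := by
    obtain ⟨hyx, hx⟩ := mem_domS_sbind.1 hy
    subst y
    simpa [sbind_self] using
      (card_componentEdges G x G.tgt (fun _ => layerConn_tgt_iff G x) m).trans
      (G.in_deg m.1 x hx)
  conn a b := .trans
    (Relation.ReflTransGen.symm_of_symm (fun _ _ ⟨e, he⟩ => ⟨e, he.symm⟩)
      (reflTransGen_component G x a.2))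
    (reflTransGen_component G x b.2)

theorem res_layerComponent (n : G.N) : (G.layerComponent x n).res = compRes G x n := by
  rw [res, compRes, Finset.sum_indicator_eq_sum_filter]
  exact (Finset.sum_subtype _ (fun _ => by simp) _).symm

theorem compRes_mem_mguP (n : G.N) : compRes G x n ∈ mguP S (sbind x (θ x)) :=
  ⟨G.layerComponent x n, G.res_layerComponent x n⟩

theorem sum_compRes_eq_res (R : Finset G.N) (hR : ∀ n, ∃! m, m ∈ R ∧ layerConn G x m n) :
    ∑ m ∈ R, compRes G x m = G.res :=
  Finset.sum_sum_indicator_of_existsUnique (layerConn G x) G.label R hR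

end PSG

theorem components_of_first_layer_general (Sig : Type) (ar : Sig → ℕ)
    (S : Set (ℕ →₀ ℕ)) (θ : ℕ → FTerm Sig ar)
    (x₁ : ℕ)
    (G : PSG Sig ar S θ) :
    (∀ n : G.N, compRes G x₁ n ∈ mguP S (sbind x₁ (θ x₁))) ∧
    (∀ R : Finset G.N, (∀ n : G.N, ∃! m : G.N, m ∈ R ∧ layerConn G x₁ m n) →
      ∑ m ∈ R, compRes G x₁ m = G.res) :=
  ⟨G.compRes_mem_mguP x₁, G.sum_compRes_eq_res x₁⟩

/-- let `𝒢` be a parallel sharing graph for `S` and the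
idempotent substitution `θ = {x₁/t₁, …, x_p/t_p}`.  Every connected component
of the layer `G¹` (the layer of the binding `x₁/t₁`), with the restricted
labeling, is a single-layer parallel sharing graph for `S` and `{x₁/t₁}`; in
particular the resultant sharing group of each component belongs to
`mgu_p(S,{x₁/t₁})`, and the multiset sum of the resultants of all the
components (enumerated by any set `R` of representatives, one per component)
equals `res(𝒢)`. -/
theorem components_of_first_layer (Sig : Type) (ar : Sig → ℕ)
    (S : Set (ℕ →₀ ℕ)) (θ : ℕ → FTerm Sig ar)
    (hfin : (domS θ).Finite) (hidem : Idem θ)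
    (x₁ : ℕ) (hx₁ : x₁ ∈ domS θ)
    (G : PSG Sig ar S θ) :
    (∀ n : G.N, compRes G x₁ n ∈ mguP S (sbind x₁ (θ x₁))) ∧
    (∀ R : Finset G.N, (∀ n : G.N, ∃! m : G.N, m ∈ R ∧ layerConn G x₁ m n) →
      ∑ m ∈ R, compRes G x₁ m = G.res) :=
  components_of_first_layer_general Sig ar S θ x₁ G
end

section
/- The abstraction map α_ω is invariant under the equivalence ~_U: if θ₁ and θ₂ are idempotent substitutions and there exists a renaming ρ with θ₁(v) = ρ(θ₂(v)) for all v in a finite set U of variables, then { θ₁⁻¹(v)|_U : v ∈ 𝒱 } = { θ₂⁻¹(v)|_U : v ∈ 𝒱 }. Hence α_ω([θ]_U) = [{ θ⁻¹(v)|_U : v ∈ 𝒱 }]_U is well defined on equivalence classes of substitutions modulo ~_U. -/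
open Classical

variable {Sig : Type} {ar : Sig → ℕ}

/-- `θ⁻¹(v)`: the ω-sharing group mapping each variable `w` to the number of
occurrences of `v` in `θ(w)` (as a plain function). -/
def invSub (θ : ℕ → FTerm Sig ar) (v : ℕ) : ℕ → ℕ := fun w => FTerm.occ v (θ w)

/-- Restriction `M|_U` of a multiset of variables to a finite set `U`. -/
noncomputable def restr (U : Finset ℕ) (f : ℕ → ℕ) : ℕ →₀ ℕ :=
  Finsupp.onFinset U (fun v => if v ∈ U then f v else 0)
    (fun v h => by by_contra hc; simp [hc] at h)

/-- A renaming: a substitution which is a bijection from the set of variables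
to itself (it maps variables to variables via a bijection `g`). -/
def IsRenaming (ρ : ℕ → FTerm Sig ar) : Prop :=
  (domS ρ).Finite ∧
  ∃ g : ℕ → ℕ, Function.Bijective g ∧ ∀ v : ℕ, ρ v = FTerm.var (g v)

theorem FTerm.occ_subst_var_comp_equiv (e : ℕ ≃ ℕ) (v : ℕ) (t : FTerm Sig ar) :
    FTerm.occ (e v) (FTerm.subst (FTerm.var ∘ e) t) = FTerm.occ v t := by
  induction t with
  | var w => simp [FTerm.subst, FTerm.occ, e.injective.eq_iff]
  | app f ts ih => simp only [FTerm.subst, FTerm.occ, ih]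

theorem restr_invSub_eq_of_renaming {U : Finset ℕ} {θ₁ θ₂ : ℕ → FTerm Sig ar} (e : ℕ ≃ ℕ)
    (hsim : ∀ w ∈ U, θ₁ w = FTerm.subst (FTerm.var ∘ e) (θ₂ w)) (v : ℕ) :
    restr U (invSub θ₁ (e v)) = restr U (invSub θ₂ v) := by
  ext w
  by_cases hw : w ∈ U
  · simp [restr, invSub, hw, hsim w hw, FTerm.occ_subst_var_comp_equiv]
  · simp [restr, hw]

theorem alpha_omega_well_defined_general (Sig : Type) (ar : Sig → ℕ) (U : Finset ℕ)
    (θ₁ θ₂ : ℕ → FTerm Sig ar)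
    (ρ : ℕ → FTerm Sig ar) (hρ : IsRenaming ρ)
    (hsim : ∀ v ∈ U, θ₁ v = FTerm.subst ρ (θ₂ v)) :
    { A : ℕ →₀ ℕ | ∃ v : ℕ, A = restr U (invSub θ₁ v) }
      = { A : ℕ →₀ ℕ | ∃ v : ℕ, A = restr U (invSub θ₂ v) } := by
  obtain ⟨-, g, hg, hρg⟩ := hρ
  let e := Equiv.ofBijective g hg
  have hρe : ρ = FTerm.var ∘ e := funext hρg
  subst hρe
  ext A
  simpa only [Set.mem_ofPred_eq, Equiv.symm_symm, restr_invSub_eq_of_renaming e hsim] using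
    e.symm.exists_congr_left (p := fun v => A = restr U (invSub θ₁ v))

/-- the abstraction map `α_ω` is invariant under `~_U`.  If
`θ₁` and `θ₂` are idempotent substitutions related by a renaming `ρ` on the
finite set `U` of variables of interest, then the sets of restricted
ω-sharing groups `{ θ₁⁻¹(v)|_U : v ∈ 𝒱 }` and `{ θ₂⁻¹(v)|_U : v ∈ 𝒱 }`
coincide; hence `α_ω` is well defined on equivalence classes modulo `~_U`. -/
theorem alpha_omega_well_defined (Sig : Type) (ar : Sig → ℕ) (U : Finset ℕ)
    (θ₁ θ₂ : ℕ → FTerm Sig ar)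
    (h₁fin : (domS θ₁).Finite) (h₁idem : Idem θ₁)
    (h₂fin : (domS θ₂).Finite) (h₂idem : Idem θ₂)
    (ρ : ℕ → FTerm Sig ar) (hρ : IsRenaming ρ)
    (hsim : ∀ v ∈ U, θ₁ v = FTerm.subst ρ (θ₂ v)) :
    { A : ℕ →₀ ℕ | ∃ v : ℕ, A = restr U (invSub θ₁ v) }
      = { A : ℕ →₀ ℕ | ∃ v : ℕ, A = restr U (invSub θ₂ v) } :=
  alpha_omega_well_defined_general Sig ar U θ₁ θ₂ ρ hρ hsim
end
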